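/- Let Φ = (Φ₁, Φ₂) ∈ ℂ²⊗L²(ℝ) be an eigenvector of Q(α,β) (α,β>0, αβ>1) where both components Φ₁, Φ₂ are odd functions. Define Φ̃_j(x) = Φ_j(x) for x ≥ 0 and Φ̃_j(x) = −Φ_j(x) for x < 0. Then Φ̃ = (Φ̃₁, Φ̃₂) lies in the form domain of Q, ‖Φ̃‖ = ‖Φ‖, and ⟨Φ̃, Q Φ̃⟩ = ⟨Φ, Q Φ⟩. Consequently, the lowest eigenvalue E₊ of the even part of Q satisfies E₊ ≤ E₋, the lowest eigenvalue of the odd part. -/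

import Mathlib

open MeasureTheory

noncomputable def Qact (α β : ℝ) (u : (ℝ → ℂ) × (ℝ → ℂ)) : (ℝ → ℂ) × (ℝ → ℂ) :=
  (fun x => (α : ℂ) * (-(1/2) * deriv (deriv u.1) x + (1/2) * (x : ℂ) ^ 2 * u.1 x)
      - ((x : ℂ) * deriv u.2 x + (1/2) * u.2 x),
   fun x => (β : ℂ) * (-(1/2) * deriv (deriv u.2) x + (1/2) * (x : ℂ) ^ 2 * u.2 x)
      + ((x : ℂ) * deriv u.1 x + (1/2) * u.1 x))

/-- Even reflection `Φ̃(x) = Φ(x)` for `x ≥ 0`, `Φ̃(x) = -Φ(x)` for `x < 0`. -/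
noncomputable def reflect (f : ℝ → ℂ) : ℝ → ℂ := fun x => if 0 ≤ x then f x else -f x

/-- `(u, g)` belongs to the form domain data of `Q`: `u`, its weak derivative `g`,
and `x·u` are square integrable and `u` is absolutely continuous with derivative `g`. -/
def FormPair (u g : ℝ → ℂ) : Prop :=
  MemLp u 2 (volume : Measure ℝ) ∧ MemLp g 2 (volume : Measure ℝ) ∧
  MemLp (fun x : ℝ => (x : ℂ) * u x) 2 (volume : Measure ℝ) ∧
  ∀ x : ℝ, u x = u 0 + ∫ t in (0 : ℝ)..x, g t

/-- The quadratic form of `Q(α,β)` evaluated on `(u₁,u₂)` with derivatives `(g₁,g₂)`. -/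
noncomputable def Qform (α β : ℝ) (u₁ u₂ g₁ g₂ : ℝ → ℂ) : ℝ :=
  ∫ x : ℝ,
    (α * ((1/2) * ‖g₁ x‖ ^ 2 + (1/2) * x ^ 2 * ‖u₁ x‖ ^ 2)
      + β * ((1/2) * ‖g₂ x‖ ^ 2 + (1/2) * x ^ 2 * ‖u₂ x‖ ^ 2)
      + (-((starRingEnd ℂ) (u₁ x)) * ((x : ℂ) * g₂ x + u₂ x / 2)
          + (starRingEnd ℂ) (u₂ x) * ((x : ℂ) * g₁ x + u₁ x / 2)).re)

/-- Infimum of the quadratic form of `Q(α,β)` over normalized even (`par = true`)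
resp. odd (`par = false`) vectors in the form domain. -/
noncomputable def Epar (α β : ℝ) (par : Bool) : ℝ :=
  sInf {r : ℝ | ∃ u₁ u₂ g₁ g₂ : ℝ → ℂ, FormPair u₁ g₁ ∧ FormPair u₂ g₂ ∧
    (∀ x, u₁ (-x) = if par then u₁ x else -u₁ x) ∧
    (∀ x, u₂ (-x) = if par then u₂ x else -u₂ x) ∧
    (∫ x : ℝ, (‖u₁ x‖ ^ 2 + ‖u₂ x‖ ^ 2)) = 1 ∧
    r = Qform α β u₁ u₂ g₁ g₂}

/-!
Reflection multiplies `(u, g)` pointwise by the sign of `x`. This preserves `‖u‖²`, `‖g‖²`,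
`x²‖u‖²` and, since both components flip sign together, the cross terms of the form; and the
reflected pair is still absolutely continuous because an odd `u` vanishes at `0`. So reflection
maps normalized odd vectors of the form domain to normalized even ones with the same energy,
whence `E₊ ≤ E₋`, as soon as the infimum over even vectors is finite (the form is nonnegative
for `αβ ≥ 1`) and the odd vectors are not empty (`x e^{-x²/2}`). That `Φ` itself lies in the
form domain uses the eigenvalue equation: it expresses `x Φ₂'` and `x Φ₁'` through
`Φⱼ, x² Φⱼ, Φⱼ''`, all in `L²`, and a continuous `h` with `x h ∈ L²` is in `L²`.
-/

open Set

section Reflect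

variable {f u g : ℝ → ℂ}

@[simp]
lemma reflect_of_nonneg {x : ℝ} (hx : 0 ≤ x) : reflect f x = f x := if_pos hx

@[simp]
lemma reflect_of_neg {x : ℝ} (hx : x < 0) : reflect f x = -f x := if_neg hx.not_ge

@[simp]
lemma norm_reflect (x : ℝ) : ‖reflect f x‖ = ‖f x‖ := by
  unfold reflect; split_ifs <;> simp

lemma reflect_eq_sign_mul :
    reflect f = fun x => (if 0 ≤ x then (1 : ℂ) else -1) * f x := by
  funext x; unfold reflect; split_ifs <;> simp

lemma coe_mul_reflect : (fun x : ℝ => (x : ℂ) * reflect f x) = reflect fun x => (x : ℂ) * f x := by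
  funext x; unfold reflect; split_ifs <;> ring

lemma Function.Odd.even_reflect (hodd : u.Odd) : (reflect u).Even := by
  intro x
  rcases lt_trichotomy x 0 with hx | rfl | hx
  · rw [reflect_of_nonneg (by linarith), reflect_of_neg hx, hodd]
  · simp
  · rw [reflect_of_neg (by linarith), reflect_of_nonneg hx.le, hodd, neg_neg]

lemma MeasureTheory.AEStronglyMeasurable.reflect {μ : Measure ℝ}
    (hf : AEStronglyMeasurable f μ) : AEStronglyMeasurable (reflect f) μ := by
  rw [reflect_eq_sign_mul]
  exact ((Measurable.ite measurableSet_Ici measurable_const measurable_const)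
    |>.aestronglyMeasurable).mul hf

lemma MeasureTheory.MemLp.reflect {p : ENNReal} {μ : Measure ℝ} (hf : MemLp f p μ) :
    MemLp (reflect f) p μ :=
  ⟨hf.1.reflect, by rw [eLpNorm_congr_norm_ae (.of_forall norm_reflect)]; exact hf.2⟩

lemma intervalIntegral_reflect_of_nonpos {x : ℝ} (hx : x ≤ 0) :
    ∫ t in (0 : ℝ)..x, reflect g t = -∫ t in (0 : ℝ)..x, g t := by
  rw [← intervalIntegral.integral_neg]
  refine intervalIntegral.integral_congr_ae ?_
  filter_upwards [compl_mem_ae_iff.2 (Real.volume_singleton (a := 0))] with t ht hmem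
  rw [uIoc_of_ge hx] at hmem
  exact reflect_of_neg (lt_of_le_of_ne hmem.2 ht)

lemma FormPair.reflect (h : FormPair u g) (hu0 : u 0 = 0) : FormPair (reflect u) (reflect g) := by
  obtain ⟨hu, hg, hxu, hftc⟩ := h
  refine ⟨hu.reflect, hg.reflect, coe_mul_reflect ▸ hxu.reflect, fun x => ?_⟩
  rcases le_or_gt 0 x with hx | hx
  · rw [reflect_of_nonneg hx, reflect_of_nonneg le_rfl, hftc x]
    congr 1
    refine intervalIntegral.integral_congr fun t ht => ?_
    rw [uIcc_of_le hx] at ht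
    exact (reflect_of_nonneg ht.1).symm
  · rw [reflect_of_neg hx, reflect_of_nonneg le_rfl, intervalIntegral_reflect_of_nonpos hx.le,
      hftc x, hu0]
    ring

lemma Qform_reflect (α β : ℝ) (u₁ u₂ g₁ g₂ : ℝ → ℂ) :
    Qform α β (reflect u₁) (reflect u₂) (reflect g₁) (reflect g₂) = Qform α β u₁ u₂ g₁ g₂ := by
  unfold Qform
  congr 1
  funext x
  rcases le_or_gt 0 x with hx | hx
  · simp only [reflect_of_nonneg hx]
  · simp only [reflect_of_neg hx, norm_neg, map_neg]
    ring_nf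

end Reflect

section Positivity

variable {α β : ℝ}

lemma mul_le_half_mul_sq_add_half_mul_sq (hα : 0 < α) (hαβ : 1 ≤ α * β) (s t : ℝ) :
    s * t ≤ α / 2 * s ^ 2 + β / 2 * t ^ 2 := by
  have hβ : 0 < β := pos_of_mul_pos_right (one_pos.trans_le hαβ) hα.le
  nlinarith [sq_nonneg (α * s - t), mul_nonneg (sub_nonneg.2 hαβ) (sq_nonneg t),
    mul_pos hα hβ]

lemma re_conj_mul_add_half_mul_sq_nonneg (hα : 0 < α) (hαβ : 1 ≤ α * β) (a b : ℂ) :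
    0 ≤ α / 2 * ‖a‖ ^ 2 + β / 2 * ‖b‖ ^ 2 + (starRingEnd ℂ b * a).re := by
  have hre := Complex.abs_re_le_norm (starRingEnd ℂ b * a)
  rw [norm_mul, Complex.norm_conj] at hre
  have hab := mul_le_half_mul_sq_add_half_mul_sq hα hαβ ‖a‖ ‖b‖
  linarith [neg_abs_le (starRingEnd ℂ b * a).re, mul_comm ‖a‖ ‖b‖]

-- The terms `∓ ū₁ u₂ / 2` of the integrand cancel in the real part; the rest splits into two
-- quadratic forms in `(g₁, x u₂)` and `(g₂, -x u₁)`.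
lemma Qform_integrand_eq (u₁ u₂ g₁ g₂ : ℝ → ℂ) (x : ℝ) :
    α * ((1/2) * ‖g₁ x‖ ^ 2 + (1/2) * x ^ 2 * ‖u₁ x‖ ^ 2)
      + β * ((1/2) * ‖g₂ x‖ ^ 2 + (1/2) * x ^ 2 * ‖u₂ x‖ ^ 2)
      + (-((starRingEnd ℂ) (u₁ x)) * ((x : ℂ) * g₂ x + u₂ x / 2)
          + (starRingEnd ℂ) (u₂ x) * ((x : ℂ) * g₁ x + u₁ x / 2)).re
    = (α / 2 * ‖g₁ x‖ ^ 2 + β / 2 * ‖(x : ℂ) * u₂ x‖ ^ 2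
          + (starRingEnd ℂ ((x : ℂ) * u₂ x) * g₁ x).re)
      + (β / 2 * ‖g₂ x‖ ^ 2 + α / 2 * ‖-((x : ℂ) * u₁ x)‖ ^ 2
          + (starRingEnd ℂ (-((x : ℂ) * u₁ x)) * g₂ x).re) := by
  simp only [Complex.sq_norm, Complex.normSq_apply, Complex.add_re, Complex.mul_re,
    Complex.neg_re, Complex.neg_im, Complex.conj_re, Complex.conj_im, Complex.div_re,
    Complex.ofReal_re, Complex.ofReal_im, Complex.mul_im, map_neg, map_mul, Complex.conj_ofReal]
  norm_num
  ring

lemma Qform_nonneg (hα : 0 < α) (hαβ : 1 ≤ α * β) (u₁ u₂ g₁ g₂ : ℝ → ℂ) :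
    0 ≤ Qform α β u₁ u₂ g₁ g₂ := by
  have hβ : 0 < β := pos_of_mul_pos_right (one_pos.trans_le hαβ) hα.le
  have hβα : 1 ≤ β * α := by rwa [mul_comm]
  refine integral_nonneg fun x => ?_
  rw [Qform_integrand_eq]
  exact add_nonneg (re_conj_mul_add_half_mul_sq_nonneg hα hαβ _ _)
    (re_conj_mul_add_half_mul_sq_nonneg hβ hβα _ _)

end Positivity

section FormDomain

lemma FormPair.zero : FormPair (fun _ => 0) (fun _ => 0) :=
  ⟨.zero', .zero', by simp [MemLp.zero'], fun _ => by simp⟩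

lemma FormPair.const_mul {u g : ℝ → ℂ} (h : FormPair u g) (c : ℂ) :
    FormPair (fun x => c * u x) (fun x => c * g x) := by
  obtain ⟨hu, hg, hxu, hftc⟩ := h
  refine ⟨hu.const_mul c, hg.const_mul c, ?_, fun x => ?_⟩
  · simpa only [mul_left_comm] using hxu.const_mul c
  · rw [intervalIntegral.integral_const_mul, ← mul_add, ← hftc x]

lemma FormPair.of_hasDerivAt {u g : ℝ → ℂ} (hderiv : ∀ x, HasDerivAt u (g x) x)
    (hg : Continuous g) (hu : MemLp u 2 volume) (hgL : MemLp g 2 volume)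
    (hxu : MemLp (fun x : ℝ => (x : ℂ) * u x) 2 volume) : FormPair u g := by
  refine ⟨hu, hgL, hxu, fun x => ?_⟩
  rw [intervalIntegral.integral_eq_sub_of_hasDerivAt (fun t _ => hderiv t)
    (hg.intervalIntegrable 0 x)]
  ring

lemma memLp_pow_mul_exp_neg_sq_div_two (n : ℕ) :
    MemLp (fun x : ℝ => ((x ^ n * Real.exp (-x ^ 2 / 2) : ℝ) : ℂ)) 2 volume := by
  refine (memLp_two_iff_integrable_sq_norm (by fun_prop)).2 ?_
  refine (integrable_rpow_mul_exp_neg_mul_sq one_pos (s := ((2 * n : ℕ) : ℝ))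
    (by linarith [(2 * n).cast_nonneg (α := ℝ)])).congr (.of_forall fun x => ?_)
  dsimp only
  rw [Real.rpow_natCast, Complex.norm_real, Real.norm_eq_abs, sq_abs, mul_pow,
    ← Real.exp_nat_mul, pow_mul]
  ring_nf

lemma hasDerivAt_mul_exp_neg_sq_div_two (x : ℝ) :
    HasDerivAt (fun x => x * Real.exp (-x ^ 2 / 2)) ((1 - x ^ 2) * Real.exp (-x ^ 2 / 2)) x :=
  ((hasDerivAt_id' x).fun_mul ((hasDerivAt_pow 2 x).fun_neg.div_const 2).exp).congr_deriv
    (by norm_num; ring)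

lemma exists_odd_formPair_integral_norm_sq_eq_one :
    ∃ u g : ℝ → ℂ, FormPair u g ∧ u.Odd ∧ ∫ x, ‖u x‖ ^ 2 = 1 := by
  set u : ℝ → ℂ := fun x => ((x * Real.exp (-x ^ 2 / 2) : ℝ) : ℂ)
  have hfp : FormPair u fun x => (((1 - x ^ 2) * Real.exp (-x ^ 2 / 2) : ℝ) : ℂ) := by
    refine .of_hasDerivAt (fun x => (hasDerivAt_mul_exp_neg_sq_div_two x).ofReal_comp)
      (by fun_prop) ?_ ?_ ?_
    · simpa only [pow_one] using memLp_pow_mul_exp_neg_sq_div_two 1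
    · refine ((memLp_pow_mul_exp_neg_sq_div_two 0).sub (memLp_pow_mul_exp_neg_sq_div_two 2)).ae_eq
        (.of_forall fun x => ?_)
      simp only [Pi.sub_apply]
      push_cast
      ring
    · refine (memLp_pow_mul_exp_neg_sq_div_two 2).ae_eq (.of_forall fun x => ?_)
      simp only [u]
      push_cast
      ring
  set N := ∫ x, ‖u x‖ ^ 2
  have hN : 0 < N := integral_pos_of_integrable_nonneg_nonzero (x := 1) (by fun_prop)
    ((memLp_two_iff_integrable_sq_norm hfp.1.1).1 hfp.1) (fun x => by positivity)
    (by simp [u])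
  refine ⟨fun x => ((√N)⁻¹ : ℝ) * u x, _, hfp.const_mul _, fun x => by simp [u], ?_⟩
  simp only [norm_mul, mul_pow, Complex.norm_real, Real.norm_eq_abs, sq_abs]
  rw [integral_const_mul, inv_pow, Real.sq_sqrt hN.le, inv_mul_cancel₀ hN.ne']

end FormDomain

lemma Epar_true_le_false {α β : ℝ} (hα : 0 < α) (hαβ : 1 ≤ α * β) :
    Epar α β true ≤ Epar α β false := by
  obtain ⟨u, g, hfp, hodd, hnorm⟩ := exists_odd_formPair_integral_norm_sq_eq_one
  refine csInf_le_csInf ⟨0, ?_⟩ ⟨_, u, _, g, _, hfp, .zero, fun x => by simpa using hodd x, by simp,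
    by simpa using hnorm, rfl⟩ ?_
  · rintro _ ⟨u₁, u₂, g₁, g₂, -, -, -, -, -, rfl⟩
    exact Qform_nonneg hα hαβ u₁ u₂ g₁ g₂
  · rintro _ ⟨u₁, u₂, g₁, g₂, h₁, h₂, hodd₁, hodd₂, hnorm, rfl⟩
    simp only [Bool.false_eq_true, if_false] at hodd₁ hodd₂
    exact ⟨reflect u₁, reflect u₂, reflect g₁, reflect g₂,
      h₁.reflect (Function.Odd.map_zero hodd₁), h₂.reflect (Function.Odd.map_zero hodd₂),
      Function.Odd.even_reflect hodd₁, Function.Odd.even_reflect hodd₂,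
      by simpa only [norm_reflect] using hnorm, (Qform_reflect α β u₁ u₂ g₁ g₂).symm⟩

section Eigenvector

variable {p : ENNReal}

lemma memLp_of_continuous_of_memLp_coe_mul {h : ℝ → ℂ} (hc : Continuous h)
    (hx : MemLp (fun x : ℝ => (x : ℂ) * h x) p volume) : MemLp h p volume := by
  obtain ⟨C, hC⟩ :=
    (isCompact_Icc (a := (-1 : ℝ)) (b := 1)).exists_bound_of_continuousOn hc.continuousOn
  have hdom : MemLp (fun x : ℝ => (Icc (-1 : ℝ) 1).indicator (fun _ => C) x + ‖(x : ℂ) * h x‖)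
      p volume :=
    (memLp_indicator_const p measurableSet_Icc C (.inr measure_Icc_lt_top.ne)).add hx.norm
  refine hdom.of_le hc.aestronglyMeasurable (.of_forall fun x => ?_)
  have hC0 : 0 ≤ C := (norm_nonneg _).trans (hC 0 (by norm_num))
  rw [Real.norm_of_nonneg (add_nonneg (indicator_nonneg (fun _ _ => hC0) x) (norm_nonneg _))]
  by_cases hx1 : x ∈ Icc (-1) 1
  · rw [indicator_of_mem hx1]
    exact le_add_of_le_of_nonneg (hC x hx1) (norm_nonneg _)
  · have h1 : 1 ≤ |x| := (not_le.1 fun h => hx1 (abs_le.1 h)).le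
    rw [indicator_of_notMem hx1, zero_add, norm_mul, Complex.norm_real, Real.norm_eq_abs]
    exact le_mul_of_one_le_left (norm_nonneg _) h1

lemma memLp_coe_mul_of_memLp_coe_sq_mul {f : ℝ → ℂ} (hf : MemLp f p volume)
    (hx2 : MemLp (fun x : ℝ => (x : ℂ) ^ 2 * f x) p volume) :
    MemLp (fun x : ℝ => (x : ℂ) * f x) p volume := by
  refine (hf.norm.add hx2.norm).of_le
    (Complex.continuous_ofReal.aestronglyMeasurable.mul hf.1) (.of_forall fun x => ?_)
  rw [Pi.add_apply, Real.norm_of_nonneg (by positivity), norm_mul, norm_mul, norm_pow,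
    Complex.norm_real, Real.norm_eq_abs, ← one_add_mul]
  gcongr
  nlinarith [sq_nonneg (|x| - 1)]

lemma FormPair.of_contDiff {f : ℝ → ℂ} (hf : ContDiff ℝ 1 f) (hL : MemLp f 2 volume)
    (hx2 : MemLp (fun x : ℝ => (x : ℂ) ^ 2 * f x) 2 volume)
    (hxd : MemLp (fun x : ℝ => (x : ℂ) * deriv f x) 2 volume) : FormPair f (deriv f) :=
  .of_hasDerivAt (fun _ => (hf.differentiable one_ne_zero).differentiableAt.hasDerivAt)
    (hf.continuous_deriv le_rfl) hL
    (memLp_of_continuous_of_memLp_coe_mul (hf.continuous_deriv le_rfl) hxd)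
    (memLp_coe_mul_of_memLp_coe_sq_mul hL hx2)

variable {α β lam : ℝ} {u₁ u₂ : ℝ → ℂ}

lemma memLp_coe_mul_deriv_snd_of_Qact_eq_smul
    (heig : Qact α β (u₁, u₂) = (lam : ℂ) • (u₁, u₂))
    (hL₁ : MemLp u₁ p volume) (hL₂ : MemLp u₂ p volume)
    (hx₁ : MemLp (fun x : ℝ => (x : ℂ) ^ 2 * u₁ x) p volume)
    (hd₁ : MemLp (deriv (deriv u₁)) p volume) :
    MemLp (fun x : ℝ => (x : ℂ) * deriv u₂ x) p volume := by
  have heq : (fun x : ℝ => (x : ℂ) * deriv u₂ x) =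
      fun x : ℝ => (α / 2 : ℂ) * ((x : ℂ) ^ 2 * u₁ x) - (α / 2 : ℂ) * deriv (deriv u₁) x
        - (1 / 2 : ℂ) * u₂ x - (lam : ℂ) * u₁ x := by
    funext x
    have h := congrFun (congrArg Prod.fst heig) x
    simp only [Qact, Prod.smul_fst, Pi.smul_apply, smul_eq_mul] at h
    linear_combination -h
  rw [heq]
  exact (((hx₁.const_mul _).sub (hd₁.const_mul _)).sub (hL₂.const_mul _)).sub (hL₁.const_mul _)

lemma memLp_coe_mul_deriv_fst_of_Qact_eq_smul
    (heig : Qact α β (u₁, u₂) = (lam : ℂ) • (u₁, u₂))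
    (hL₁ : MemLp u₁ p volume) (hL₂ : MemLp u₂ p volume)
    (hx₂ : MemLp (fun x : ℝ => (x : ℂ) ^ 2 * u₂ x) p volume)
    (hd₂ : MemLp (deriv (deriv u₂)) p volume) :
    MemLp (fun x : ℝ => (x : ℂ) * deriv u₁ x) p volume := by
  have heq : (fun x : ℝ => (x : ℂ) * deriv u₁ x) = fun x : ℝ => (lam : ℂ) * u₂ x
      + (β / 2 : ℂ) * deriv (deriv u₂) x - (β / 2 : ℂ) * ((x : ℂ) ^ 2 * u₂ x)
      - (1 / 2 : ℂ) * u₁ x := by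
    funext x
    have h := congrFun (congrArg Prod.snd heig) x
    simp only [Qact, Prod.smul_snd, Pi.smul_apply, smul_eq_mul] at h
    linear_combination h
  rw [heq]
  exact (((hL₂.const_mul _).add (hd₂.const_mul _)).sub (hx₂.const_mul _)).sub (hL₁.const_mul _)

end Eigenvector

theorem reflection_of_odd_eigenvector_general (α β : ℝ) (hα : 0 < α)
    (hαβ : 1 < α * β) (lam : ℝ) (Φ₁ Φ₂ : ℝ → ℂ)
    (hC1 : ContDiff ℝ 2 Φ₁) (hC2 : ContDiff ℝ 2 Φ₂)
    (hL1 : MemLp Φ₁ 2 (volume : Measure ℝ)) (hL2 : MemLp Φ₂ 2 (volume : Measure ℝ))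
    (hx1 : MemLp (fun x : ℝ => (x : ℂ) ^ 2 * Φ₁ x) 2 (volume : Measure ℝ))
    (hx2 : MemLp (fun x : ℝ => (x : ℂ) ^ 2 * Φ₂ x) 2 (volume : Measure ℝ))
    (hd1 : MemLp (deriv (deriv Φ₁)) 2 (volume : Measure ℝ))
    (hd2 : MemLp (deriv (deriv Φ₂)) 2 (volume : Measure ℝ))
    (hodd1 : ∀ x, Φ₁ (-x) = -Φ₁ x) (hodd2 : ∀ x, Φ₂ (-x) = -Φ₂ x)
    (heig : Qact α β (Φ₁, Φ₂) = ((lam : ℂ)) • (Φ₁, Φ₂)) :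
    FormPair (reflect Φ₁) (reflect (deriv Φ₁)) ∧
    FormPair (reflect Φ₂) (reflect (deriv Φ₂)) ∧
    (∫ x : ℝ, (‖reflect Φ₁ x‖ ^ 2 + ‖reflect Φ₂ x‖ ^ 2))
      = (∫ x : ℝ, (‖Φ₁ x‖ ^ 2 + ‖Φ₂ x‖ ^ 2)) ∧
    Qform α β (reflect Φ₁) (reflect Φ₂) (reflect (deriv Φ₁)) (reflect (deriv Φ₂))
      = Qform α β Φ₁ Φ₂ (deriv Φ₁) (deriv Φ₂) ∧
    Epar α β true ≤ Epar α β false := by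
  have hΦ₁ : FormPair Φ₁ (deriv Φ₁) := .of_contDiff (hC1.of_le one_le_two) hL1 hx1
    (memLp_coe_mul_deriv_fst_of_Qact_eq_smul heig hL1 hL2 hx2 hd2)
  have hΦ₂ : FormPair Φ₂ (deriv Φ₂) := .of_contDiff (hC2.of_le one_le_two) hL2 hx2
    (memLp_coe_mul_deriv_snd_of_Qact_eq_smul heig hL1 hL2 hx1 hd1)
  exact ⟨hΦ₁.reflect (Function.Odd.map_zero hodd1), hΦ₂.reflect (Function.Odd.map_zero hodd2),
    by simp only [norm_reflect], Qform_reflect α β Φ₁ Φ₂ (deriv Φ₁) (deriv Φ₂),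
    Epar_true_le_false hα hαβ.le⟩

/-- The reflection of an odd eigenvector of `Q(α,β)` stays in the form domain, has
the same norm and the same quadratic form value; consequently `E₊ ≤ E₋`. -/
theorem reflection_of_odd_eigenvector (α β : ℝ) (hα : 0 < α) (hβ : 0 < β)
    (hαβ : 1 < α * β) (lam : ℝ) (Φ₁ Φ₂ : ℝ → ℂ)
    (hC1 : ContDiff ℝ 2 Φ₁) (hC2 : ContDiff ℝ 2 Φ₂)
    (hL1 : MemLp Φ₁ 2 (volume : Measure ℝ)) (hL2 : MemLp Φ₂ 2 (volume : Measure ℝ))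
    (hx1 : MemLp (fun x : ℝ => (x : ℂ) ^ 2 * Φ₁ x) 2 (volume : Measure ℝ))
    (hx2 : MemLp (fun x : ℝ => (x : ℂ) ^ 2 * Φ₂ x) 2 (volume : Measure ℝ))
    (hd1 : MemLp (deriv (deriv Φ₁)) 2 (volume : Measure ℝ))
    (hd2 : MemLp (deriv (deriv Φ₂)) 2 (volume : Measure ℝ))
    (hodd1 : ∀ x, Φ₁ (-x) = -Φ₁ x) (hodd2 : ∀ x, Φ₂ (-x) = -Φ₂ x)
    (heig : Qact α β (Φ₁, Φ₂) = ((lam : ℂ)) • (Φ₁, Φ₂)) :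
    FormPair (reflect Φ₁) (reflect (deriv Φ₁)) ∧
    FormPair (reflect Φ₂) (reflect (deriv Φ₂)) ∧
    (∫ x : ℝ, (‖reflect Φ₁ x‖ ^ 2 + ‖reflect Φ₂ x‖ ^ 2))
      = (∫ x : ℝ, (‖Φ₁ x‖ ^ 2 + ‖Φ₂ x‖ ^ 2)) ∧
    Qform α β (reflect Φ₁) (reflect Φ₂) (reflect (deriv Φ₁)) (reflect (deriv Φ₂))
      = Qform α β Φ₁ Φ₂ (deriv Φ₁) (deriv Φ₂) ∧
    Epar α β true ≤ Epar α β false :=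
  reflection_of_odd_eigenvector_general α β hα hαβ lam Φ₁ Φ₂ hC1 hC2 hL1 hL2 hx1 hx2 hd1 hd2 hodd1
    hodd2 heig
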